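/- Let L₁ and L₂ be real n×n lower triangular matrices with positive diagonal entries such that L₁ * L₁ᵀ = L₂ * L₂ᵀ. Then the matrix M = L₁⁻¹ * L₂ is lower triangular and satisfies M * Mᵀ = 1 (the identity matrix). -/
import Mathlib

open Matrix

/-- Let `L₁` and `L₂` be real `n × n` lower triangular matrices with positive diagonal entries
such that `L₁ * L₁ᵀ = L₂ * L₂ᵀ`. Then the matrix `M = L₁⁻¹ * L₂` is lower triangular and
satisfies `M * Mᵀ = 1`. -/
theorem inv_mul_lowerTriangular_orthogonal (n : ℕ) (L₁ L₂ : Matrix (Fin n) (Fin n) ℝ)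
    (hL₁ : ∀ i j, i < j → L₁ i j = 0) (hL₁d : ∀ i, 0 < L₁ i i)
    (hL₂ : ∀ i j, i < j → L₂ i j = 0) (hL₂d : ∀ i, 0 < L₂ i i)
    (h : L₁ * L₁ᵀ = L₂ * L₂ᵀ) :
    (∀ i j, i < j → (L₁⁻¹ * L₂) i j = 0) ∧ (L₁⁻¹ * L₂) * (L₁⁻¹ * L₂)ᵀ = 1 := by
  have hbt1 : L₁.BlockTriangular OrderDual.toDual := fun i j hij => hL₁ i j hij
  have hbt2 : L₂.BlockTriangular OrderDual.toDual := fun i j hij => hL₂ i j hij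
  have hdet : L₁.det ≠ 0 := by
    rw [det_of_lowerTriangular L₁ hbt1]
    exact ne_of_gt (Finset.prod_pos fun i _ => hL₁d i)
  have : Invertible L₁ := invertibleOfIsUnitDet L₁ (isUnit_iff_ne_zero.2 hdet)
  have hinv : (L₁⁻¹).BlockTriangular OrderDual.toDual :=
    blockTriangular_inv_of_blockTriangular hbt1
  refine ⟨fun i j hij => (hinv.mul hbt2) hij, ?_⟩
  rw [transpose_mul, Matrix.mul_assoc, ← Matrix.mul_assoc L₂, ← h,
    Matrix.mul_assoc L₁, transpose_nonsing_inv,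
    Matrix.mul_nonsing_inv L₁ᵀ (by rwa [det_transpose, isUnit_iff_ne_zero]), Matrix.mul_one,
    Matrix.nonsing_inv_mul L₁ (isUnit_iff_ne_zero.2 hdet)]
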